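/- If x, y, u, v are non-negative integers such that 2^x·3^y - 2^u·5^v = 1, then (x, y, u, v) is one of (0,4,4,1), (1,1,0,1), (1,0,0,0), (0,1,1,0), (0,2,3,0). -/

import Mathlib

/-!
Comparing parities shows that exactly one of `x`, `u` vanishes. If `u = 0`, reduction modulo 4
forces `x = 1`, leaving `2·3^y = 5^v + 1`; if `x = 0` we are left with `3^y = 2^u·5^v + 1`.
Each of the remaining equations is settled by a pair of moduli: a prime power of one base
pins down the exponent of the other base modulo its multiplicative order, and a second prime,
modulo which that order is the same, then yields a contradiction for all but the small solutions.
-/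

theorem mod_eq_of_pow_eq {M : Type*} [Monoid M] {a b : M} {k r n : ℕ} (hk : 0 < k)
    (ha : a ^ k = 1) (hr : ∀ i < k, a ^ i = b → i = r) (hn : a ^ n = b) : n % k = r :=
  hr _ (Nat.mod_lt n hk) ((pow_eq_pow_mod n ha).symm.trans hn)

theorem eq_zero_iff_ne_zero_of_two_pow_mul_eq {a b x u : ℕ} (ha : Odd a) (hb : Odd b)
    (h : 2 ^ x * a = 2 ^ u * b + 1) : x = 0 ↔ u ≠ 0 := by
  have := congrArg Even h
  simp [Nat.even_mul, Nat.even_pow, Nat.even_add_one, Nat.not_even_iff_odd.mpr ha,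
    Nat.not_even_iff_odd.mpr hb] at this
  tauto

theorem lt_two_of_two_pow_mul_eq_pow_add_one {a b x v : ℕ} (hb : b % 4 = 1)
    (h : 2 ^ x * a = b ^ v + 1) : x < 2 := by
  by_contra! hx
  have h4 : 4 ∣ 2 ^ x * a := (pow_dvd_pow 2 hx).mul_right a
  have : b ^ v % 4 = 1 := by simp [Nat.pow_mod, hb]
  omega

instance : Fact (Nat.Prime 7) := ⟨by norm_num⟩
instance : Fact (Nat.Prime 11) := ⟨by norm_num⟩
instance : Fact (Nat.Prime 19) := ⟨by norm_num⟩
instance : Fact (Nat.Prime 41) := ⟨by norm_num⟩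

/-- `2^9 + 1 = 3^3 · 19`, and `2` has order `18` modulo both `27` and `19`. -/
theorem three_pow_eq_two_pow_add_one {y u : ℕ} (h : 3 ^ y = 2 ^ u + 1) :
    y = 1 ∧ u = 1 ∨ y = 2 ∧ u = 3 := by
  obtain hy | hy := lt_or_ge y 3
  · interval_cases y
    · have := Nat.one_le_two_pow (n := u); omega
    · left; exact ⟨rfl, Nat.pow_right_injective le_rfl (by simpa using h.symm)⟩
    · right; exact ⟨rfl, Nat.pow_right_injective le_rfl (by simpa using h.symm)⟩
  · exfalso
    have h27 := congrArg (Nat.cast : ℕ → ZMod 27) h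
    have h19 := congrArg (Nat.cast : ℕ → ZMod 19) h
    push_cast at h27 h19
    have hu : u % 18 = 9 := by
      refine mod_eq_of_pow_eq (a := (2 : ZMod 27)) (b := -1) (by norm_num) (by decide)
        (by decide) ?_
      rw [← Nat.add_sub_cancel' hy, pow_add, (by decide : (3 : ZMod 27) ^ 3 = 0), zero_mul] at h27
      exact eq_neg_of_add_eq_zero_left h27.symm
    rw [pow_eq_pow_mod u (by decide : (2 : ZMod 19) ^ 18 = 1), hu,
      (by decide : (2 : ZMod 19) ^ 9 + 1 = 0)] at h19
    exact pow_ne_zero y (by decide) h19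

/-- `5^3 + 1 = 2 · 3^2 · 7`, and `5` has order `6` modulo both `9` and `7`. -/
theorem two_mul_three_pow_eq_five_pow_add_one {y v : ℕ} (h : 2 * 3 ^ y = 5 ^ v + 1) :
    y = 0 ∧ v = 0 ∨ y = 1 ∧ v = 1 := by
  obtain hy | hy := lt_or_ge y 2
  · interval_cases y
    · left; exact ⟨rfl, Nat.pow_right_injective le_rfl (by simpa using h.symm)⟩
    · right
      exact ⟨rfl, Nat.pow_right_injective (a := 5) (by norm_num) (by simpa using h.symm)⟩
  · exfalso
    have h9 := congrArg (Nat.cast : ℕ → ZMod 9) h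
    have h7 := congrArg (Nat.cast : ℕ → ZMod 7) h
    push_cast at h9 h7
    have hv : v % 6 = 3 := by
      refine mod_eq_of_pow_eq (a := (5 : ZMod 9)) (b := -1) (by norm_num) (by decide)
        (by decide) ?_
      rw [← Nat.add_sub_cancel' hy, pow_add, (by decide : (3 : ZMod 9) ^ 2 = 0), zero_mul,
        mul_zero] at h9
      exact eq_neg_of_add_eq_zero_left h9.symm
    rw [pow_eq_pow_mod v (by decide : (5 : ZMod 7) ^ 6 = 1), hv,
      (by decide : (5 : ZMod 7) ^ 3 + 1 = 0)] at h7
    exact mul_ne_zero (by decide) (pow_ne_zero y (by decide)) h7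

/-- Modulo `5` and `16` one gets `4 ∣ y` and `4 ≤ u`; if `u ≥ 5`, then `8 ∣ y` modulo `32`,
and `3^8 ≡ 1 mod 41` contradicts `41 ∤ 2^u · 5`. -/
theorem three_pow_eq_two_pow_mul_five_add_one {y u : ℕ} (h : 3 ^ y = 2 ^ u * 5 + 1) :
    y = 4 ∧ u = 4 := by
  have h5 := congrArg (Nat.cast : ℕ → ZMod 5) h
  have h16 := congrArg (Nat.cast : ℕ → ZMod 16) h
  have h32 := congrArg (Nat.cast : ℕ → ZMod 32) h
  have h41 := congrArg (Nat.cast : ℕ → ZMod 41) h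
  push_cast at h5 h16 h32 h41
  have hy4 : y % 4 = 0 := by
    refine mod_eq_of_pow_eq (a := (3 : ZMod 5)) (b := 1) (by norm_num) (by decide) (by decide) ?_
    simpa [(by decide : (5 : ZMod 5) = 0)] using h5
  have hu4 : 4 ≤ u := by
    rw [pow_eq_pow_mod y (by decide : (3 : ZMod 16) ^ 4 = 1), hy4, pow_zero, right_eq_add] at h16
    by_contra! hu
    interval_cases u <;> revert h16 <;> decide
  have hu5 : u < 5 := by
    by_contra! hu
    rw [← Nat.add_sub_cancel' hu, pow_add, (by decide : (2 : ZMod 32) ^ 5 = 0), zero_mul,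
      zero_mul, zero_add] at h32
    have hy8 : y % 8 = 0 :=
      mod_eq_of_pow_eq (a := (3 : ZMod 32)) (by norm_num) (by decide) (by decide) h32
    rw [pow_eq_pow_mod y (by decide : (3 : ZMod 41) ^ 8 = 1), hy8, pow_zero, right_eq_add] at h41
    exact mul_ne_zero (pow_ne_zero u (by decide)) (by decide) h41
  obtain rfl : u = 4 := by omega
  exact ⟨Nat.pow_right_injective (a := 3) (by norm_num) (by simpa using h), rfl⟩

/-- `3` has order `20` modulo `25`, and `3^20 ≡ 1 mod 11`. -/
theorem three_pow_ne_two_pow_mul_five_pow_add_one {y u v : ℕ} (hv : 2 ≤ v) :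
    3 ^ y ≠ 2 ^ u * 5 ^ v + 1 := by
  intro h
  have h25 := congrArg (Nat.cast : ℕ → ZMod 25) h
  have h11 := congrArg (Nat.cast : ℕ → ZMod 11) h
  push_cast at h25 h11
  rw [← Nat.add_sub_cancel' hv, pow_add, (by decide : (5 : ZMod 25) ^ 2 = 0), zero_mul,
    mul_zero, zero_add] at h25
  have hy : y % 20 = 0 :=
    mod_eq_of_pow_eq (a := (3 : ZMod 25)) (by norm_num) (by decide) (by decide) h25
  rw [pow_eq_pow_mod y (by decide : (3 : ZMod 11) ^ 20 = 1), hy, pow_zero, right_eq_add] at h11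
  exact mul_ne_zero (pow_ne_zero u (by decide)) (pow_ne_zero v (by decide)) h11

/-- Solutions of `2^x 3^y - 2^u 5^v = 1` in non-negative integers. -/
theorem two_three_minus_two_five (x y u v : ℕ)
    (h : 2 ^ x * 3 ^ y - 2 ^ u * 5 ^ v = 1) :
    (x, y, u, v) = (0, 4, 4, 1) ∨ (x, y, u, v) = (1, 1, 0, 1) ∨
      (x, y, u, v) = (1, 0, 0, 0) ∨ (x, y, u, v) = (0, 1, 1, 0) ∨
      (x, y, u, v) = (0, 2, 3, 0) := by
  have E : 2 ^ x * 3 ^ y = 2 ^ u * 5 ^ v + 1 := by omega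
  have hxu :=
    eq_zero_iff_ne_zero_of_two_pow_mul_eq (Odd.pow (by decide)) (Odd.pow (by decide)) E
  rcases Nat.eq_zero_or_pos u with rfl | hu
  · rw [pow_zero, one_mul] at E
    obtain rfl : x = 1 := by
      have := lt_two_of_two_pow_mul_eq_pow_add_one (by norm_num) E
      simp only [ne_eq, not_true_eq_false, iff_false] at hxu
      omega
    rcases two_mul_three_pow_eq_five_pow_add_one (by simpa using E) with ⟨rfl, rfl⟩ | ⟨rfl, rfl⟩
      <;> simp
  · obtain rfl : x = 0 := hxu.mpr hu.ne'
    rw [pow_zero, one_mul] at E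
    match v, E with
    | 0, E =>
      rcases three_pow_eq_two_pow_add_one (by simpa using E) with ⟨rfl, rfl⟩ | ⟨rfl, rfl⟩
        <;> simp
    | 1, E =>
      obtain ⟨rfl, rfl⟩ := three_pow_eq_two_pow_mul_five_add_one (by simpa using E)
      simp
    | v + 2, E => exact absurd E (three_pow_ne_two_pow_mul_five_pow_add_one le_add_self)
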